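/- Let $\lambda_1, \dots, \lambda_n$ be real numbers with $\sum_i \lambda_i = 0$ ($n \ge 2$), not all zero. Equality $\sum_i \lambda_i^3 = -\frac{n-2}{\sqrt{n(n-1)}} ( \sum_i \lambda_i^2 )^{3/2}$ holds if and only if, after reordering, $\lambda_1 = \cdots = \lambda_{n-1} = \lambda$ and $\lambda_n = -(n-1)\lambda$ for some $\lambda > 0$. -/

import Mathlib

/-!
Put `s = ∑ λᵢ²` and choose `a > 0` with `n(n-1)a² = s`, so that the right-hand side is
`-(n-2)n(n-1)a³`. Using `∑ λᵢ = 0`,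
`∑ (λᵢ - a)²(λᵢ + (n-1)a) = ∑ λᵢ³ + (n-2)n(n-1)a³`,
and Samuelson's inequality `λᵢ ≥ -(n-1)a` makes every summand nonnegative. So equality holds
iff each `λᵢ` is `a` or `-(n-1)a`, and `∑ λᵢ = 0` forces exactly one of them to be `-(n-1)a`.
-/

open Finset

section
variable {ι : Type*} [Fintype ι] {x : ι → ℝ}

/-- Samuelson's inequality. -/
theorem card_mul_sq_le_of_sum_eq_zero (hx : ∑ i, x i = 0) (i : ι) :
    (Fintype.card ι : ℝ) * x i ^ 2 ≤ (Fintype.card ι - 1) * ∑ j, x j ^ 2 := by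
  classical
  have hrest : ∑ j ∈ univ.erase i, x j = -x i := by
    linarith [add_sum_erase univ x (mem_univ i)]
  have hrest_sq : ∑ j ∈ univ.erase i, x j ^ 2 = ∑ j, x j ^ 2 - x i ^ 2 := by
    linarith [add_sum_erase univ (fun j ↦ x j ^ 2) (mem_univ i)]
  have hcs := sq_sum_le_card_mul_sum_sq (s := univ.erase i) (f := x)
  rw [hrest, hrest_sq, card_erase_of_mem (mem_univ i), card_univ,
    Nat.cast_pred (Fintype.card_pos_iff.mpr ⟨i⟩)] at hcs
  linear_combination hcs

theorem sum_sq_sub_mul_add_eq (hx : ∑ i, x i = 0) (a : ℝ) :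
    ∑ i, (x i - a) ^ 2 * (x i + (Fintype.card ι - 1) * a) =
      ∑ i, x i ^ 3 + (Fintype.card ι - 3) * a * ∑ i, x i ^ 2 +
        Fintype.card ι * (Fintype.card ι - 1) * a ^ 3 := by
  have hexpand : ∀ i, (x i - a) ^ 2 * (x i + (Fintype.card ι - 1) * a) =
      x i ^ 3 + (Fintype.card ι - 3) * a * x i ^ 2 +
        (1 - 2 * (Fintype.card ι - 1)) * a ^ 2 * x i + (Fintype.card ι - 1) * a ^ 3 :=
    fun i ↦ by ring
  simp only [hexpand, sum_add_distrib, ← mul_sum, hx, sum_const, card_univ, nsmul_eq_mul]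
  ring

theorem sum_cube_eq_iff_forall_eq_or_eq [Nonempty ι] (hx : ∑ i, x i = 0) {a : ℝ} (ha : 0 ≤ a)
    (hs : Fintype.card ι * (Fintype.card ι - 1) * a ^ 2 = ∑ i, x i ^ 2) :
    ∑ i, x i ^ 3 = -((Fintype.card ι - 2) * (Fintype.card ι * (Fintype.card ι - 1)) * a ^ 3) ↔
      ∀ i, x i = a ∨ x i = -(Fintype.card ι - 1) * a := by
  have hn : (1 : ℝ) ≤ Fintype.card ι := Nat.one_le_cast.mpr Fintype.card_pos
  have hlower : ∀ i, 0 ≤ x i + (Fintype.card ι - 1) * a := by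
    intro i
    have hsq : x i ^ 2 ≤ ((Fintype.card ι - 1) * a) ^ 2 :=
      le_of_mul_le_mul_left
        ((card_mul_sq_le_of_sum_eq_zero hx i).trans_eq (by rw [← hs]; ring)) (by linarith)
    linarith [(abs_le_of_sq_le_sq' hsq (mul_nonneg (by linarith) ha)).1]
  calc ∑ i, x i ^ 3 = -((Fintype.card ι - 2) * (Fintype.card ι * (Fintype.card ι - 1)) * a ^ 3)
      ↔ ∑ i, (x i - a) ^ 2 * (x i + (Fintype.card ι - 1) * a) = 0 := by
        rw [sum_sq_sub_mul_add_eq hx, ← hs]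
        constructor <;> intro h <;> linear_combination h
    _ ↔ ∀ i, (x i - a) ^ 2 * (x i + (Fintype.card ι - 1) * a) = 0 := by
        rw [Fintype.sum_eq_zero_iff_of_nonneg fun i ↦ mul_nonneg (sq_nonneg _) (hlower i),
          funext_iff]
        rfl
    _ ↔ ∀ i, x i = a ∨ x i = -(Fintype.card ι - 1) * a := by
        simp only [mul_eq_zero, pow_eq_zero_iff two_ne_zero, sub_eq_zero, add_eq_zero_iff_eq_neg,
          neg_mul]

theorem exists_eq_neg_and_forall_ne_eq [Nonempty ι] {a : ℝ} (ha : a ≠ 0) (hx : ∑ i, x i = 0)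
    (hval : ∀ i, x i = a ∨ x i = -(Fintype.card ι - 1) * a) :
    ∃ i, x i = -(Fintype.card ι - 1) * a ∧ ∀ j, j ≠ i → x j = a := by
  classical
  set T := univ.filter fun i ↦ x i ≠ a
  have hmem : ∀ j, j ∈ T ↔ x j ≠ a := by simp [T]
  have hx_eq : ∀ i, x i = a - Fintype.card ι * a * if i ∈ T then 1 else 0 := by
    intro i
    by_cases h : x i = a
    · simp [hmem, h]
    · rw [if_pos ((hmem i).mpr h), (hval i).resolve_left h]
      ring
  have hT : #T = 1 := by
    have hna : (Fintype.card ι : ℝ) * a ≠ 0 := mul_ne_zero (by positivity) ha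
    have h : (Fintype.card ι : ℝ) * a * (1 - #T) = 0 := by
      rw [← hx, sum_congr rfl fun i _ ↦ hx_eq i, sum_sub_distrib, ← mul_sum, sum_boole,
        filter_mem_eq_inter, univ_inter, sum_const, card_univ, nsmul_eq_mul]
      ring
    exact_mod_cast (sub_eq_zero.mp ((mul_eq_zero.mp h).resolve_left hna)).symm
  obtain ⟨i, hi⟩ := card_eq_one.mp hT
  refine ⟨i, (hval i).resolve_left ((hmem i).mp (hi ▸ mem_singleton_self i)), fun j hj ↦ ?_⟩
  have hjT : j ∉ T := by simpa [hi] using hj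
  simpa [hmem] using hjT

theorem sum_sq_eq_of_eq_neg_of_forall_ne_eq {lam : ℝ} {i : ι}
    (hi : x i = -(Fintype.card ι - 1) * lam) (hj : ∀ j, j ≠ i → x j = lam) :
    ∑ j, x j ^ 2 = Fintype.card ι * (Fintype.card ι - 1) * lam ^ 2 := by
  classical
  rw [← add_sum_erase univ _ (mem_univ i),
    sum_congr rfl fun j hj' ↦ by rw [hj j (ne_of_mem_erase hj')], sum_const,
    card_erase_of_mem (mem_univ i), card_univ, nsmul_eq_mul,
    Nat.cast_pred (Fintype.card_pos_iff.mpr ⟨i⟩), hi]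
  ring

end

theorem mul_sq_sqrt_div_sqrt {s c : ℝ} (hs : 0 ≤ s) (hc : 0 < c) : c * (√s / √c) ^ 2 = s := by
  rw [div_pow, Real.sq_sqrt hs, Real.sq_sqrt hc.le, mul_div_cancel₀ _ hc.ne']

theorem div_sqrt_mul_rpow_three_halves (b : ℝ) {s c : ℝ} (hs : 0 ≤ s) (hc : 0 < c) :
    b / √c * s ^ ((3 : ℝ) / 2) = b * c * (√s / √c) ^ 3 := by
  have hc' : √c ^ 2 = c := Real.sq_sqrt hc.le
  rw [Real.rpow_div_two_eq_sqrt _ hs, show (3 : ℝ) = (3 : ℕ) by norm_num, Real.rpow_natCast]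
  field_simp
  rw [hc']
  ring

/-- For reals `λ₁, …, λₙ` with `∑ λᵢ = 0` (`n ≥ 2`), not all zero, equality
`∑ λᵢ³ = -((n-2)/√(n(n-1))) (∑ λᵢ²)^{3/2}` holds iff, after reordering, `n-1` of them equal
some `λ > 0` and the remaining one equals `-(n-1)λ`. -/
theorem scalar_cubic_equality_case (n : ℕ) (hn : 2 ≤ n)
    (l : Fin n → ℝ) (hsum : ∑ i, l i = 0) (hne : l ≠ 0) :
    (∑ i, (l i) ^ 3 =
        -((n - 2 : ℝ) / Real.sqrt (n * (n - 1))) * (∑ i, (l i) ^ 2) ^ ((3 : ℝ) / 2)) ↔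
      ∃ lam : ℝ, 0 < lam ∧ ∃ i : Fin n,
        l i = -(n - 1 : ℝ) * lam ∧ ∀ j : Fin n, j ≠ i → l j = lam := by
  have : Nonempty (Fin n) := ⟨⟨0, by omega⟩⟩
  have hc : 0 < (n * (n - 1) : ℝ) := by
    have : (2 : ℝ) ≤ n := by exact_mod_cast hn
    nlinarith
  have hs : 0 < ∑ i, l i ^ 2 := by
    refine (Fintype.sum_nonneg fun i ↦ sq_nonneg (l i)).lt_of_ne' fun h ↦ hne (funext fun i ↦ ?_)
    simp only [sq, sum_mul_self_eq_zero_iff] at h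
    exact h i (mem_univ i)
  set a := √(∑ i, l i ^ 2) / √(n * (n - 1))
  have ha : 0 < a := by positivity
  have hsa : n * (n - 1) * a ^ 2 = ∑ i, l i ^ 2 := mul_sq_sqrt_div_sqrt hs.le hc
  have key := sum_cube_eq_iff_forall_eq_or_eq hsum ha.le (by simpa using hsa)
  simp only [Fintype.card_fin] at key
  rw [neg_mul, div_sqrt_mul_rpow_three_halves _ hs.le hc, key]
  constructor
  · intro hval
    exact ⟨a, ha, by simpa using exists_eq_neg_and_forall_ne_eq ha.ne' hsum (by simpa using hval)⟩
  · rintro ⟨lam, hlam, i, hi, hj⟩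
    obtain rfl : lam = a := by
      have hsq := sum_sq_eq_of_eq_neg_of_forall_ne_eq (x := l) (by simpa using hi) hj
      simp only [Fintype.card_fin] at hsq
      exact (pow_left_inj₀ hlam.le ha.le two_ne_zero).mp
        (mul_left_cancel₀ hc.ne' (hsq.symm.trans hsa.symm))
    intro j
    by_cases hji : j = i
    · exact Or.inr (hji ▸ hi)
    · exact Or.inl (hj j hji)
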